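/- Separating-conjunction rule with an assertion predicate (rule rsep-sim): Assume the execution relation red is execution-composable. Let Assn be a type of assertions with a binary operation * and a reduction relation rc : Assn → V → V → Option V → Prop on Viper-style states. Fix assertions A1, A2 and suppose rc satisfies the forward decomposition properties: (a) if rc (A1 * A2) σ0 σ (some σ'') then there exists σ' with rc A1 σ0 σ (some σ') and rc A2 σ0 σ' (some σ''); and (b) if rc (A1 * A2) σ0 σ none then rc A1 σ0 σ none, or there exists σ' with rc A1 σ0 σ (some σ') and rc A2 σ0 σ' none. Let Q : Assn → (V × V) → Prop and define rcSimQ(Q, R, R', A, γ, γ') := sim over pairs of Viper-style states with input relation (fun (σ0, σ) σb => R((σ0, σ), σb) ∧ Q(A, (σ0, σ))), output relation R', success predicate (fun (σ0, σ) (σ1, σ') => σ0 = σ1 ∧ rc A σ0 σ (some σ')), and failure predicate (fun (σ0, σ) => rc A σ0 σ none), from γ to γ'. Suppose rcSimQ(Q, R, R', A1, γ, γ') and rcSimQ(Q, R', R'', A2, γ', γ'') hold, and suppose for all σ0, σ: Q(A1 * A2, (σ0, σ)) implies both Q(A1, (σ0, σ)) and, for all σ' with rc A1 σ0 σ (some σ'),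 Q(A2, (σ0, σ')). Then rcSimQ(Q, R, R'', A1 * A2, γ, γ'') holds. -/

import Mathlib

/-- Generic forward simulation judgement. -/
def Sim {S B P : Type*} (red : P → B → P → Option B → Prop)
    (Rin Rout : S → B → Prop) (Succ : S → S → Prop) (Fail : S → Prop)
    (γin γout : P) : Prop :=
  ∀ τ σ, Rin τ σ →
    ((∀ τ', Succ τ τ' → ∃ σ', red γin σ γout (some σ') ∧ Rout τ' σ') ∧
     (Fail τ → ∃ γ', red γin σ γ' none))

/-- The execution relation is execution-composable. -/
def ExecComposable {B P : Type*} (red : P → B → P → Option B → Prop) : Prop :=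
  ∀ γ σ γ' σ' γ'' r, red γ σ γ' (some σ') → red γ' σ' γ'' r → red γ σ γ'' r

/-- A Viper-style state: store, heap, and permission mask. -/
structure VState (Var Loc Val : Type*) where
  store : Var → Val
  heap : Loc → Val
  mask : Loc → ℚ

/-- Simulation for the remove-and-check phase of exhaling assertion `A`,
specialised with an assertion predicate `Q`. -/
def RcSimQ {Var Loc Val B P Assn : Type*}
    (red : P → B → P → Option B → Prop)
    (rc : Assn → VState Var Loc Val → VState Var Loc Val →
      Option (VState Var Loc Val) → Prop)
    (Q : Assn → VState Var Loc Val × VState Var Loc Val → Prop)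
    (R R' : VState Var Loc Val × VState Var Loc Val → B → Prop)
    (A : Assn) (γ γ' : P) : Prop :=
  Sim red
    (fun p σb => R p σb ∧ Q A p)
    R'
    (fun p q => p.1 = q.1 ∧ rc A p.1 p.2 (some q.2))
    (fun p => rc A p.1 p.2 none)
    γ γ'

/-! Removing `A1 * A2` is simulated by running the simulations for `A1` and `A2` in sequence,
since a successful removal of `A1 * A2` splits into removals of `A1` and then `A2`, and a failing
one fails either in `A1` or in `A2` after `A1` succeeded. For the second simulation to apply, the
intermediate state must also satisfy the assertion predicate for `A2`; `hQ` transports this along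
the successful removal of `A1`. -/

namespace Sim

variable {S B P : Type*} {red : P → B → P → Option B → Prop}
  {Rin Rin' Rmid Rout : S → B → Prop} {Succ Succ' Succ₁ Succ₂ : S → S → Prop}
  {Fail Fail' Fail₁ Fail₂ : S → Prop} {γ γ' γ'' : P}

theorem mono (h : Sim red Rin Rout Succ Fail γ γ') (hRin : ∀ τ σ, Rin' τ σ → Rin τ σ)
    (hSucc : ∀ τ τ', Succ' τ τ' → Succ τ τ') (hFail : ∀ τ, Fail' τ → Fail τ) :
    Sim red Rin' Rout Succ' Fail' γ γ' := fun τ σ hτσ =>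
  let ⟨hS, hF⟩ := h τ σ (hRin τ σ hτσ)
  ⟨fun τ' hτ' => hS τ' (hSucc τ τ' hτ'), fun hτ => hF (hFail τ hτ)⟩

theorem and_out {Post : S → Prop} (h : Sim red Rin Rout Succ Fail γ γ')
    (hPost : ∀ τ σ τ', Rin τ σ → Succ τ τ' → Post τ') :
    Sim red Rin (fun τ' σ' => Rout τ' σ' ∧ Post τ') Succ Fail γ γ' := by
  intro τ σ hτσ
  obtain ⟨hS, hF⟩ := h τ σ hτσ
  refine ⟨fun τ' hτ' => ?_, hF⟩
  obtain ⟨σ', hred, hout⟩ := hS τ' hτ'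
  exact ⟨σ', hred, hout, hPost τ σ τ' hτσ hτ'⟩

theorem seq (hred : ExecComposable red) (h₁ : Sim red Rin Rmid Succ₁ Fail₁ γ γ')
    (h₂ : Sim red Rmid Rout Succ₂ Fail₂ γ' γ'') :
    Sim red Rin Rout (Relation.Comp Succ₁ Succ₂)
      (fun τ => Fail₁ τ ∨ ∃ τ', Succ₁ τ τ' ∧ Fail₂ τ') γ γ'' := by
  intro τ σ hτσ
  obtain ⟨hS₁, hF₁⟩ := h₁ τ σ hτσ
  constructor
  · rintro τ'' ⟨τ', hτ', hτ''⟩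
    obtain ⟨σ', hred₁, hmid⟩ := hS₁ τ' hτ'
    obtain ⟨σ'', hred₂, hout⟩ := (h₂ τ' σ' hmid).1 τ'' hτ''
    exact ⟨σ'', hred _ _ _ _ _ _ hred₁ hred₂, hout⟩
  · rintro (hfail | ⟨τ', hτ', hfail⟩)
    · exact hF₁ hfail
    · obtain ⟨σ', hred₁, hmid⟩ := hS₁ τ' hτ'
      obtain ⟨γf, hred₂⟩ := (h₂ τ' σ' hmid).2 hfail
      exact ⟨γf, hred _ _ _ _ _ _ hred₁ hred₂⟩

end Sim

/-- Rule rsep-sim: separating-conjunction rule with an assertion predicate. -/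
theorem rsep_sim_rule {Var Loc Val B P Assn : Type*}
    (red : P → B → P → Option B → Prop)
    (hred : ExecComposable red)
    (star : Assn → Assn → Assn)
    (rc : Assn → VState Var Loc Val → VState Var Loc Val →
      Option (VState Var Loc Val) → Prop)
    (A1 A2 : Assn)
    (hrcS : ∀ σ0 σ σ'', rc (star A1 A2) σ0 σ (some σ'') →
      ∃ σ', rc A1 σ0 σ (some σ') ∧ rc A2 σ0 σ' (some σ''))
    (hrcF : ∀ σ0 σ, rc (star A1 A2) σ0 σ none →
      rc A1 σ0 σ none ∨ ∃ σ', rc A1 σ0 σ (some σ') ∧ rc A2 σ0 σ' none)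
    (Q : Assn → VState Var Loc Val × VState Var Loc Val → Prop)
    (R R' R'' : VState Var Loc Val × VState Var Loc Val → B → Prop)
    (γ γ' γ'' : P)
    (h1 : RcSimQ red rc Q R R' A1 γ γ')
    (h2 : RcSimQ red rc Q R' R'' A2 γ' γ'')
    (hQ : ∀ σ0 σ, Q (star A1 A2) (σ0, σ) →
      Q A1 (σ0, σ) ∧ ∀ σ', rc A1 σ0 σ (some σ') → Q A2 (σ0, σ')) :
    RcSimQ red rc Q R R'' (star A1 A2) γ γ'' := by
  have h1Q : Sim red (fun p σb => R p σb ∧ Q (star A1 A2) p)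
      (fun p σb => R' p σb ∧ Q A2 p) (fun p q => p.1 = q.1 ∧ rc A1 p.1 p.2 (some q.2))
      (fun p => rc A1 p.1 p.2 none) γ γ' :=
    (h1.mono (fun p _ hp => ⟨hp.1, (hQ p.1 p.2 hp.2).1⟩) (fun _ _ => id) (fun _ => id)).and_out
      (by rintro ⟨σ0, σ⟩ _ ⟨_, σ'⟩ ⟨-, hQstar⟩ ⟨rfl, hrc1⟩; exact (hQ σ0 σ hQstar).2 σ' hrc1)
  refine (Sim.seq hred h1Q h2).mono (fun _ _ => id) ?_ ?_
  · rintro ⟨σ0, σ⟩ ⟨_, σ''⟩ ⟨rfl, hrc⟩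
    obtain ⟨σ', hrc1, hrc2⟩ := hrcS σ0 σ σ'' hrc
    exact ⟨(σ0, σ'), ⟨rfl, hrc1⟩, rfl, hrc2⟩
  · rintro ⟨σ0, σ⟩ hrc
    rcases hrcF σ0 σ hrc with hrc1 | ⟨σ', hrc1, hrc2⟩
    · exact Or.inl hrc1
    · exact Or.inr ⟨(σ0, σ'), ⟨rfl, hrc1⟩, hrc2⟩
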